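/- For every D ∈ H⁴ with Kelvin matrix 𝐃, and for all real λ, μ, the Betten determinant factorizes as 2μ · det(𝐃 − C_{λ,μ}) = (3λ + 2μ) · det(2μ·I₆ − 𝐃), where C_{λ,μ} is the Kelvin matrix of the isotropic elasticity tensor. Equivalently, the Betten polynomial B_D(λ,μ) = det(𝐃 − C_{λ,μ}) equals (3λ + 2μ)·χ_D^r(2μ), where χ_D(z) = z·χ_D^r(z) is the characteristic polynomial of 𝐃. -/

import Mathlib

/-! The traceless condition says exactly that the Kelvin vector `v = (1,1,1,0,0,0)` of the
identity is annihilated by `𝐃`, and `C_{λ,μ} = 2μ I + λ v vᵀ`. So `v` is an eigenvector of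
`t I − 𝐃` with eigenvalue `t`, and the rank-one update `λ v vᵀ` multiplies its determinant by
`(t + λ |v|²) / t = (t + 3λ) / t`. At `t = 2μ` this is the factorization; read as an identity of
polynomials in `t` it gives `X ∣ χ_D` and identifies the Betten polynomial with `(X + 3λ) χ_D^r`
at `2μ`. -/

open Matrix BigOperators

abbrev Mat3 := Matrix (Fin 3) (Fin 3) ℝ
abbrev T4 := Fin 3 → Fin 3 → Fin 3 → Fin 3 → ℝ

/-- `g ∈ SO(3)`: real orthogonal 3×3 matrix of determinant 1. -/
def IsSO3 (g : Mat3) : Prop := g * gᵀ = 1 ∧ g.det = 1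

/-- A harmonic fourth-order tensor: totally symmetric and traceless. -/
def IsHarm (D : T4) : Prop :=
  (∀ i j k l, D i j k l = D j i k l) ∧
  (∀ i j k l, D i j k l = D i k j l) ∧
  (∀ i j k l, D i j k l = D i j l k) ∧
  (∀ i j, ∑ k, D k k i j = 0)

/-- The action of a rotation `g` on a fourth-order tensor. -/
noncomputable def act (g : Mat3) (D : T4) : T4 := fun i j k l =>
  ∑ p, ∑ q, ∑ r, ∑ s, g i p * g j q * g k r * g l s * D p q r s

/-- `D²`, the square of a fourth-order tensor. -/
noncomputable def sqT (D : T4) : T4 := fun i j k l => ∑ p, ∑ q, D i j p q * D p q k l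

/-- `D³`, the cube of a fourth-order tensor. -/
noncomputable def cbT (D : T4) : T4 := fun i j k l => ∑ p, ∑ q, sqT D i j p q * D p q k l

/-- The second-order Boehler covariant `d₂(D) j l = ∑ᵢ (D²) i j i l`. -/
noncomputable def d2 (D : T4) : Mat3 := Matrix.of fun j l => ∑ i, sqT D i j i l

/-- The second-order covariant `d₃(D) j l = ∑ᵢ (D³) i j i l`. -/
noncomputable def d3 (D : T4) : Mat3 := Matrix.of fun j l => ∑ i, cbT D i j i l

/-- Fundamental invariant `J₂ = tr d₂`. -/
noncomputable def J2 (D : T4) : ℝ := (d2 D).trace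
/-- Fundamental invariant `J₃ = tr d₃`. -/
noncomputable def J3 (D : T4) : ℝ := (d3 D).trace
/-- Fundamental invariant `J₄ = tr(d₂²)`. -/
noncomputable def J4 (D : T4) : ℝ := (d2 D * d2 D).trace
/-- Fundamental invariant `J₅ = ∑ (d₂)ᵢⱼ D i j k l (d₂)ₖₗ`. -/
noncomputable def J5 (D : T4) : ℝ :=
  ∑ i, ∑ j, ∑ k, ∑ l, d2 D i j * D i j k l * d2 D k l
/-- Fundamental invariant `J₆ = tr(d₂³)`. -/
noncomputable def J6 (D : T4) : ℝ := (d2 D * d2 D * d2 D).trace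
/-- Fundamental invariant `J₇ = ∑ (d₂²)ᵢⱼ D i j k l (d₂)ₖₗ`. -/
noncomputable def J7 (D : T4) : ℝ :=
  ∑ i, ∑ j, ∑ k, ∑ l, (d2 D * d2 D) i j * D i j k l * d2 D k l
/-- Fundamental invariant `J₈ = ∑ (d₂²)ᵢⱼ (D²) i j k l (d₂)ₖₗ`. -/
noncomputable def J8 (D : T4) : ℝ :=
  ∑ i, ∑ j, ∑ k, ∑ l, (d2 D * d2 D) i j * sqT D i j k l * d2 D k l
/-- Fundamental invariant `J₉ = ∑ (d₂²)ᵢⱼ D i j k l (d₂²)ₖₗ`. -/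
noncomputable def J9 (D : T4) : ℝ :=
  ∑ i, ∑ j, ∑ k, ∑ l, (d2 D * d2 D) i j * D i j k l * (d2 D * d2 D) k l
/-- Fundamental invariant `J₁₀ = ∑ (d₂²)ᵢⱼ (D²) i j k l (d₂²)ₖₗ`. -/
noncomputable def J10 (D : T4) : ℝ :=
  ∑ i, ∑ j, ∑ k, ∑ l, (d2 D * d2 D) i j * sqT D i j k l * (d2 D * d2 D) k l

/-- The totally symmetric tensor whose value at `(i,j,k,l)` depends only on the
multiset of indices `{i,j,k,l}`. -/
noncomputable def symT (f : Multiset (Fin 3) → ℝ) : T4 := fun i j k l => f {i, j, k, l}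

/-- The Kelvin index pairs `p₁=(1,1), p₂=(2,2), p₃=(3,3), p₄=(2,3), p₅=(1,3), p₆=(1,2)`
(0-based). -/
def kidx : Fin 6 → Fin 3 × Fin 3 := ![(0, 0), (1, 1), (2, 2), (1, 2), (0, 2), (0, 1)]

/-- The Kelvin weights: `1` on the first three indices, `√2` on the last three. -/
noncomputable def kw : Fin 6 → ℝ := ![1, 1, 1, Real.sqrt 2, Real.sqrt 2, Real.sqrt 2]

/-- The Kelvin (6×6) matrix of a fourth-order tensor. -/
noncomputable def kelvin (D : T4) : Matrix (Fin 6) (Fin 6) ℝ :=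
  Matrix.of fun m n => kw m * kw n * D (kidx m).1 (kidx m).2 (kidx n).1 (kidx n).2

/-- The Kelvin matrix `C_{λ,μ}` of the isotropic elasticity tensor. -/
noncomputable def Ciso (lam mu : ℝ) : Matrix (Fin 6) (Fin 6) ℝ :=
  Matrix.of fun m n =>
    if m.val < 3 ∧ n.val < 3 then (if m = n then lam + 2 * mu else lam)
    else if m = n then 2 * mu else 0

theorem Matrix.mul_det_add_smul_vecMulVec {n K : Type*} [Fintype n] [DecidableEq n] [Field K]
    {A : Matrix n n K} {u : n → K} {t : K} (hu : A *ᵥ u = t • u) (c : K) (w : n → K) :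
    t * (A + c • vecMulVec u w).det = A.det * (t + c * (w ⬝ᵥ u)) := by
  rcases eq_or_ne t 0 with rfl | ht
  · rcases eq_or_ne u 0 with rfl | hu0
    · simp
    · have hA : A.det = 0 := exists_mulVec_eq_zero_iff.mp ⟨u, hu0, by simpa using hu⟩
      simp [hA]
  -- `A` need not be invertible: `A u = t u` lets it be factored out of the rank-one update.
  · have hfactor : A + c • vecMulVec u w = A * (1 + vecMulVec ((c / t) • u) w) := by
      rw [Matrix.mul_add, Matrix.mul_one, mul_vecMulVec, mulVec_smul, hu, smul_smul,
        div_mul_cancel₀ c ht, smul_vecMulVec]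
    rw [hfactor, det_mul, vecMulVec_eq Unit, det_one_add_replicateCol_mul_replicateRow,
      dotProduct_smul, smul_eq_mul]
    field_simp

lemma IsHarm.swap_pairs {D : T4} (hD : IsHarm D) (i j k l : Fin 3) : D i j k l = D k l i j :=
  (hD.2.1 i j k l).trans <| (hD.1 i k j l).trans <| (hD.2.2.1 k i j l).trans (hD.2.1 k i l j)

lemma IsHarm.sum_diag_right {D : T4} (hD : IsHarm D) (i j : Fin 3) : ∑ k, D i j k k = 0 := by
  simpa only [hD.swap_pairs i j] using hD.2.2.2 i j

/-- The Kelvin vector of the identity tensor `δᵢⱼ`. -/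
def kelvinId : Fin 6 → ℝ := ![1, 1, 1, 0, 0, 0]

lemma Ciso_eq (lam mu : ℝ) :
    Ciso lam mu = (2 * mu) • 1 + lam • vecMulVec kelvinId kelvinId := by
  ext m n
  fin_cases m <;> fin_cases n <;> simp [Ciso, kelvinId, one_apply, add_comm]

lemma kelvin_mulVec_kelvinId {D : T4} (hD : IsHarm D) : kelvin D *ᵥ kelvinId = 0 := by
  ext m
  rw [Pi.zero_apply, ← mul_zero (kw m), ← hD.sum_diag_right (kidx m).1 (kidx m).2]
  fin_cases m <;> simp [mulVec, dotProduct, Fin.sum_univ_six, Fin.sum_univ_three, kelvin, kelvinId,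
    kidx, kw, mul_add]

lemma mul_det_smul_one_sub_kelvin_add {D : T4} (hD : IsHarm D) (t lam : ℝ) :
    t * (t • 1 - kelvin D + lam • vecMulVec kelvinId kelvinId).det =
      (t + 3 * lam) * (t • 1 - kelvin D).det := by
  have heigen : (t • 1 - kelvin D) *ᵥ kelvinId = t • kelvinId := by
    rw [sub_mulVec, smul_mulVec, one_mulVec, kelvin_mulVec_kelvinId hD, sub_zero]
  have hnorm : kelvinId ⬝ᵥ kelvinId = 3 := by
    norm_num [kelvinId, dotProduct, Fin.sum_univ_succ]
  rw [mul_det_add_smul_vecMulVec heigen, hnorm, mul_comm lam, mul_comm]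

open Polynomial in
lemma X_mul_charpoly_kelvin_sub {D : T4} (hD : IsHarm D) (lam : ℝ) :
    X * (kelvin D - lam • vecMulVec kelvinId kelvinId).charpoly =
      (X + C (3 * lam)) * (kelvin D).charpoly := by
  refine Polynomial.funext fun t => ?_
  simp only [eval_mul, eval_add, eval_X, eval_C, eval_charpoly, scalar_apply,
    ← smul_one_eq_diagonal, sub_sub_eq_add_sub]
  rw [add_sub_right_comm, mul_det_smul_one_sub_kelvin_add hD]

open Polynomial in
/-- for every `D ∈ H⁴` with Kelvin matrix `𝐃`, the Betten determinant
factorizes as `2μ · det(𝐃 − C_{λ,μ}) = (3λ + 2μ) · det(2μ·I₆ − 𝐃)`; equivalently the Betten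
polynomial equals `(3λ + 2μ)·χᵣ(2μ)` where `charpoly 𝐃 = X · χᵣ`. -/
theorem betten_factorization (D : T4) (hD : IsHarm D) :
    (∀ lam mu : ℝ,
      2 * mu * (kelvin D - Ciso lam mu).det =
        (3 * lam + 2 * mu) * ((2 * mu) • (1 : Matrix (Fin 6) (Fin 6) ℝ) - kelvin D).det) ∧
    (∃ χr : Polynomial ℝ, (kelvin D).charpoly = X * χr ∧
      ∀ lam mu : ℝ,
        (kelvin D - Ciso lam mu).det = (3 * lam + 2 * mu) * χr.eval (2 * mu)) := by
  have hsplit : ∀ lam mu : ℝ, kelvin D - Ciso lam mu =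
      -((2 * mu) • 1 - kelvin D + lam • vecMulVec kelvinId kelvinId) := by
    intro lam mu
    rw [Ciso_eq]
    abel
  obtain ⟨χr, hχr⟩ : X ∣ (kelvin D).charpoly := by
    rw [X_dvd_iff, coeff_zero_eq_eval_zero]
    simpa using congrArg (eval 0) (X_mul_charpoly_kelvin_sub hD 1)
  refine ⟨fun lam mu => ?_, χr, hχr, fun lam mu => ?_⟩
  · rw [hsplit, det_neg, mul_left_comm, mul_det_smul_one_sub_kelvin_add hD]
    simp only [Fintype.card_fin]
    ring
  · have hcharpoly : (kelvin D - lam • vecMulVec kelvinId kelvinId).charpoly =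
        (X + C (3 * lam)) * χr :=
      mul_left_cancel₀ X_ne_zero <| by
        rw [X_mul_charpoly_kelvin_sub hD, hχr, mul_left_comm]
    have hdet : ((2 * mu) • 1 - kelvin D + lam • vecMulVec kelvinId kelvinId).det =
        (kelvin D - lam • vecMulVec kelvinId kelvinId).charpoly.eval (2 * mu) := by
      rw [eval_charpoly, scalar_apply, ← smul_one_eq_diagonal, sub_sub_eq_add_sub,
        add_sub_right_comm]
    rw [hsplit, det_neg, hdet, hcharpoly]
    simp only [Fintype.card_fin, eval_mul, eval_add, eval_X, eval_C]
    ring
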